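/- Let y, z, m be real numbers with 0 ≤ y ≤ z < 1 and 0 ≤ m < 1. Define ẑ = z + (1-z)·max(m-y,0)/(1-y). Then ẑ ≥ max(y, m) and ẑ ≥ z. In particular ẑ ≥ max(y ∨ m, z). -/
import Mathlib


/-- Key inequality of the domination principle: with `0 ≤ y ≤ z < 1`, `0 ≤ m < 1` and
`ẑ = z + (1-z)·max(m-y,0)/(1-y)`, we have `ẑ ≥ max y m`, `ẑ ≥ z`, and hence
`ẑ ≥ max (y ⊔ m) z`. -/
theorem bak_sneppen_domination_inequality (y z m : ℝ)
    (hy : 0 ≤ y) (hyz : y ≤ z) (hz : z < 1) (hm0 : 0 ≤ m) (hm : m < 1) :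
    max y m ≤ z + (1 - z) * (max (m - y) 0 / (1 - y)) ∧
    z ≤ z + (1 - z) * (max (m - y) 0 / (1 - y)) ∧
    max (max y m) z ≤ z + (1 - z) * (max (m - y) 0 / (1 - y)) := by
  have h1y : (0:ℝ) < 1 - y := by linarith
  have key : max y m ≤ z + (1 - z) * (max (m - y) 0 / (1 - y)) := by
    rcases le_total m y with h | h
    · rw [max_eq_left h, max_eq_right (by linarith)]
      have : (0:ℝ) ≤ (1 - z) * (0 / (1 - y)) := by simp
      linarith
    · rw [max_eq_right h, max_eq_left (by linarith)]
      rw [← sub_nonneg]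
      have heq : z + (1 - z) * ((m - y) / (1 - y)) - m
          = (z - y) * ((1 - m) / (1 - y)) := by
        field_simp
        ring
      rw [heq]
      exact mul_nonneg (by linarith) (div_nonneg (by linarith) h1y.le)
  have hz' : z ≤ z + (1 - z) * (max (m - y) 0 / (1 - y)) := by
    have : (0:ℝ) ≤ (1 - z) * (max (m - y) 0 / (1 - y)) :=
      mul_nonneg (by linarith) (div_nonneg (le_max_right _ _) h1y.le)
    linarith
  exact ⟨key, hz', max_le key hz'⟩
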